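/- Let ν > 0, ν ≠ 1. The functions θ₊(a) = a^{−1}(1 + a)^{(1−ν)/2} and θ₋(a) = a^{−1}(1 − a)^{(1−ν)/2} solve the ordinary differential equation (1 − a²)[y''(a) + (2/a)y'(a)] − (1 + ν) a y'(a) − ((1−ν)/2 − 1)((1−ν)/2 − 2) y(a) = 0 on (0,1), and their Wronskian satisfies θ₊(a)θ₋'(a) − θ₊'(a)θ₋(a) = (ν − 1) a^{−2}(1 − a²)^{−(1+ν)/2} for all a ∈ (0,1). -/

import Mathlib

noncomputable section

open Real

/-- `θ₊(a) = a⁻¹(1+a)^{(1-ν)/2}`. -/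
def thetaPlus (ν a : ℝ) : ℝ := a⁻¹ * (1 + a) ^ ((1 - ν) / 2)

/-- `θ₋(a) = a⁻¹(1-a)^{(1-ν)/2}`. -/
def thetaMinus (ν a : ℝ) : ℝ := a⁻¹ * (1 - a) ^ ((1 - ν) / 2)

/-!
Writing `y = u / a` turns `y'' + (2/a) y'` into `u'' / a` (the radial Laplacian of `ℝ³`), so with
`p = (1 - ν)/2`, hence `1 + ν = 2(1 - p)`, the equation for `y` becomes
`(1 - a²) u'' - 2(1 - p) a u' - p(p - 1) u = 0`. Since `1 - a² = (1 ∓ a)(1 ± a)`, both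
`u = (1 ± a)^p` solve it. The substitution multiplies Wronskians by `a⁻²`, and
`W((1 + a)^p, (1 - a)^p) = -2p (1 - a²)^(p - 1)`.
-/

open Filter Topology

def selfSimilarOperator (ν : ℝ) (y : ℝ → ℝ) (a : ℝ) : ℝ :=
  (1 - a ^ 2) * (deriv (deriv y) a + 2 / a * deriv y a)
    - (1 + ν) * a * deriv y a
    - ((1 - ν) / 2 - 1) * ((1 - ν) / 2 - 2) * y a

theorem hasDerivAt_inv_mul {u : ℝ → ℝ} {u' a : ℝ} (hu : HasDerivAt u u' a) (ha : a ≠ 0) :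
    HasDerivAt (fun x => x⁻¹ * u x) (a⁻¹ * u' - (a ^ 2)⁻¹ * u a) a :=
  ((hasDerivAt_inv ha).fun_mul hu).congr_deriv (by ring)

theorem deriv_deriv_inv_mul_add_two_div_mul_deriv {u u' : ℝ → ℝ} {u'' a : ℝ} (ha : a ≠ 0)
    (hu : ∀ᶠ x in 𝓝 a, HasDerivAt u (u' x) x) (hu' : HasDerivAt u' u'' a) :
    deriv (deriv fun x => x⁻¹ * u x) a + 2 / a * deriv (fun x => x⁻¹ * u x) a = a⁻¹ * u'' := by
  have hderiv : deriv (fun x => x⁻¹ * u x) =ᶠ[𝓝 a] fun x => x⁻¹ * u' x - (x ^ 2)⁻¹ * u x := by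
    filter_upwards [hu, isOpen_ne.mem_nhds ha] with x hx hx0
    exact (hasDerivAt_inv_mul hx hx0).deriv
  have hinv_sq : HasDerivAt (fun x : ℝ => (x ^ 2)⁻¹) (-(2 * a) / (a ^ 2) ^ 2) a := by
    simpa using (hasDerivAt_pow 2 a).fun_inv (pow_ne_zero 2 ha)
  have hu₀ := hu.self_of_nhds
  rw [hderiv.deriv_eq, ((hasDerivAt_inv_mul hu' ha).fun_sub (hinv_sq.fun_mul hu₀)).deriv,
    (hasDerivAt_inv_mul hu₀ ha).deriv]
  field_simp
  ring

theorem selfSimilarOperator_inv_mul (ν : ℝ) {u u' : ℝ → ℝ} {u'' a : ℝ} (ha : a ≠ 0)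
    (hu : ∀ᶠ x in 𝓝 a, HasDerivAt u (u' x) x) (hu' : HasDerivAt u' u'' a) :
    selfSimilarOperator ν (fun x => x⁻¹ * u x) a
      = a⁻¹ * ((1 - a ^ 2) * u'' - (1 + ν) * a * u' a
          - (((1 - ν) / 2 - 1) * ((1 - ν) / 2 - 2) - (1 + ν)) * u a) := by
  rw [selfSimilarOperator, deriv_deriv_inv_mul_add_two_div_mul_deriv ha hu hu',
    (hasDerivAt_inv_mul hu.self_of_nhds ha).deriv]
  field_simp
  ring

theorem hasDerivAt_one_add_mul_rpow (σ p : ℝ) {a : ℝ} (h : 0 < 1 + σ * a) :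
    HasDerivAt (fun x => (1 + σ * x) ^ p) (σ * p * (1 + σ * a) ^ (p - 1)) a :=
  ((((hasDerivAt_id' a).const_mul σ).const_add 1).rpow_const (Or.inl h.ne')).congr_deriv
    (by ring)

theorem selfSimilarOperator_inv_mul_one_add_mul_rpow (ν : ℝ) {σ a : ℝ} (hσ : σ ^ 2 = 1)
    (ha : 0 < a) (h : 0 < 1 + σ * a) :
    selfSimilarOperator ν (fun x => x⁻¹ * (1 + σ * x) ^ ((1 - ν) / 2)) a = 0 := by
  set p := (1 - ν) / 2 with hp
  have hu : ∀ᶠ x in 𝓝 a,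
      HasDerivAt (fun x => (1 + σ * x) ^ p) (σ * p * (1 + σ * x) ^ (p - 1)) x := by
    have hopen : IsOpen {x : ℝ | 0 < 1 + σ * x} := isOpen_lt continuous_const (by fun_prop)
    filter_upwards [hopen.mem_nhds h] with x hx
    exact hasDerivAt_one_add_mul_rpow σ p hx
  have hu' := (hasDerivAt_one_add_mul_rpow σ (p - 1) h).const_mul (σ * p)
  rw [selfSimilarOperator_inv_mul ν ha.ne' hu hu', ← hp]
  set s := 1 + σ * a
  -- the reduced equation divided by `s ^ (p - 2)`
  have key : (1 - a ^ 2) * σ ^ 2 * p * (p - 1) - (1 + ν) * a * σ * p * s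
      - ((p - 1) * (p - 2) - (1 + ν)) * s ^ 2 = 0 := by
    linear_combination ((1 - a ^ 2) * p * (p - 1) - (1 + ν) * p * a ^ 2
      - ((p - 1) * (p - 2) - (1 + ν)) * a ^ 2) * hσ
  simp only [Real.rpow_sub_one h.ne']
  field_simp
  linear_combination s ^ p * key

theorem wronskian_inv_mul {u v : ℝ → ℝ} {u' v' a : ℝ} (hu : HasDerivAt u u' a)
    (hv : HasDerivAt v v' a) (ha : a ≠ 0) :
    a⁻¹ * u a * deriv (fun x => x⁻¹ * v x) a - deriv (fun x => x⁻¹ * u x) a * (a⁻¹ * v a)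
      = (a ^ 2)⁻¹ * (u a * v' - u' * v a) := by
  rw [(hasDerivAt_inv_mul hu ha).deriv, (hasDerivAt_inv_mul hv ha).deriv]
  ring

theorem thetaPlus_eq (ν : ℝ) : thetaPlus ν = fun x => x⁻¹ * (1 + 1 * x) ^ ((1 - ν) / 2) := by
  simp only [one_mul]
  rfl

theorem thetaMinus_eq (ν : ℝ) : thetaMinus ν = fun x => x⁻¹ * (1 + -1 * x) ^ ((1 - ν) / 2) := by
  simp only [neg_one_mul, ← sub_eq_add_neg]
  rfl

theorem thetaPlus_mul_deriv_thetaMinus_sub_deriv_thetaPlus_mul {ν a : ℝ} (ha : a ∈ Set.Ioo 0 1) :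
    thetaPlus ν a * deriv (thetaMinus ν) a - deriv (thetaPlus ν) a * thetaMinus ν a
      = (ν - 1) * a ^ (-(2 : ℝ)) * (1 - a ^ 2) ^ (-(1 + ν) / 2) := by
  obtain ⟨ha₀, ha₁⟩ := ha
  have hplus : 0 < 1 + a := by linarith
  have hminus : 0 < 1 - a := by linarith
  rw [thetaPlus_eq, thetaMinus_eq]
  refine (wronskian_inv_mul (hasDerivAt_one_add_mul_rpow 1 _ (by linarith))
    (hasDerivAt_one_add_mul_rpow (-1) _ (by linarith)) ha₀.ne').trans ?_
  simp only [one_mul, neg_one_mul, ← sub_eq_add_neg]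
  rw [show (1 - a ^ 2) = (1 + a) * (1 - a) by ring, Real.mul_rpow hplus.le hminus.le,
    show -(1 + ν) / 2 = (1 - ν) / 2 - 1 by ring, Real.rpow_neg ha₀.le, Real.rpow_two]
  simp only [Real.rpow_sub_one hplus.ne', Real.rpow_sub_one hminus.ne']
  field_simp
  ring

theorem self_similar_fundamental_system_general (ν : ℝ) :
    (∀ a ∈ Set.Ioo (0 : ℝ) 1,
      (1 - a ^ 2) * (deriv (deriv (thetaPlus ν)) a + 2 / a * deriv (thetaPlus ν) a)
        - (1 + ν) * a * deriv (thetaPlus ν) a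
        - ((1 - ν) / 2 - 1) * ((1 - ν) / 2 - 2) * thetaPlus ν a = 0) ∧
    (∀ a ∈ Set.Ioo (0 : ℝ) 1,
      (1 - a ^ 2) * (deriv (deriv (thetaMinus ν)) a + 2 / a * deriv (thetaMinus ν) a)
        - (1 + ν) * a * deriv (thetaMinus ν) a
        - ((1 - ν) / 2 - 1) * ((1 - ν) / 2 - 2) * thetaMinus ν a = 0) ∧
    (∀ a ∈ Set.Ioo (0 : ℝ) 1,
      thetaPlus ν a * deriv (thetaMinus ν) a - deriv (thetaPlus ν) a * thetaMinus ν a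
        = (ν - 1) * a ^ (-(2 : ℝ)) * (1 - a ^ 2) ^ (-(1 + ν) / 2)) := by
  refine ⟨fun a ha => ?_, fun a ha => ?_, fun a ha =>
    thetaPlus_mul_deriv_thetaMinus_sub_deriv_thetaPlus_mul ha⟩
  · rw [thetaPlus_eq]
    exact selfSimilarOperator_inv_mul_one_add_mul_rpow ν (one_pow 2) ha.1 (by linarith [ha.1])
  · rw [thetaMinus_eq]
    exact selfSimilarOperator_inv_mul_one_add_mul_rpow ν (by norm_num) ha.1 (by linarith [ha.2])

/-- `θ₊, θ₋` solve the self-similar ODE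
`(1-a²)[y'' + (2/a)y'] - (1+ν)ay' - ((1-ν)/2-1)((1-ν)/2-2)y = 0` on `(0,1)`
and their Wronskian is `θ₊θ₋' - θ₊'θ₋ = (ν-1)a^{-2}(1-a²)^{-(1+ν)/2}`. -/
theorem self_similar_fundamental_system (ν : ℝ) (hν0 : 0 < ν) (hν1 : ν ≠ 1) :
    (∀ a ∈ Set.Ioo (0 : ℝ) 1,
      (1 - a ^ 2) * (deriv (deriv (thetaPlus ν)) a + 2 / a * deriv (thetaPlus ν) a)
        - (1 + ν) * a * deriv (thetaPlus ν) a
        - ((1 - ν) / 2 - 1) * ((1 - ν) / 2 - 2) * thetaPlus ν a = 0) ∧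
    (∀ a ∈ Set.Ioo (0 : ℝ) 1,
      (1 - a ^ 2) * (deriv (deriv (thetaMinus ν)) a + 2 / a * deriv (thetaMinus ν) a)
        - (1 + ν) * a * deriv (thetaMinus ν) a
        - ((1 - ν) / 2 - 1) * ((1 - ν) / 2 - 2) * thetaMinus ν a = 0) ∧
    (∀ a ∈ Set.Ioo (0 : ℝ) 1,
      thetaPlus ν a * deriv (thetaMinus ν) a - deriv (thetaPlus ν) a * thetaMinus ν a
        = (ν - 1) * a ^ (-(2 : ℝ)) * (1 - a ^ 2) ^ (-(1 + ν) / 2)) :=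
  self_similar_fundamental_system_general ν
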